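/- If a graph G on n vertices contains a twin pair (two true twins or two false twins), then for every 0 ≤ k ≤ n, the number of non-forcing k-subsets satisfies z'(G;k) ≥ C(n−2, k), and hence z'(G;k) ≥ C(n−k−1, k) = z'(P_n;k); that is, G is path-extremal. -/

import Mathlib

open SimpleGraph

/-- The zero forcing closure: `ZFClosure G S v` means vertex `v` eventually becomes blue
when starting from the blue set `S` and repeatedly applying the color-change rule:
a blue vertex with exactly one white neighbor forces that neighbor to become blue. -/
inductive ZFClosure {V : Type*} (G : SimpleGraph V) (S : Set V) : V → Prop
  | init {v : V} : v ∈ S → ZFClosure G S v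
  | force {u w : V} : ZFClosure G S u → G.Adj u w →
      (∀ x, G.Adj u x → x ≠ w → ZFClosure G S x) → ZFClosure G S w

/-- `S` is a zero forcing set of `G` if its closure is all of `V`. -/
def IsZeroForcing {V : Type*} (G : SimpleGraph V) (S : Set V) : Prop :=
  ∀ v, ZFClosure G S v

/-- `z(G;k)`: the number of zero forcing sets of size `k`. -/
noncomputable def zfCount {V : Type*} (G : SimpleGraph V) [Fintype V] (k : ℕ) : ℕ :=
  Nat.card {S : Finset V // S.card = k ∧ IsZeroForcing G ↑S}

/-- `z'(G;k)`: the number of non-forcing `k`-subsets. -/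
noncomputable def nfCount {V : Type*} (G : SimpleGraph V) [Fintype V] (k : ℕ) : ℕ :=
  Nat.card {S : Finset V // S.card = k ∧ ¬ IsZeroForcing G ↑S}

/-- A fort: every vertex outside `F` has `0` or at least `2` neighbors in `F`. -/
def IsFort {V : Type*} (G : SimpleGraph V) (F : Set V) : Prop :=
  ∀ v ∉ F, (∀ w ∈ F, ¬ G.Adj v w) ∨
    ∃ w₁ ∈ F, ∃ w₂ ∈ F, w₁ ≠ w₂ ∧ G.Adj v w₁ ∧ G.Adj v w₂

/-- True twins: adjacent with the same neighbors outside the pair. -/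
def TrueTwins {V : Type*} (G : SimpleGraph V) (u v : V) : Prop :=
  G.Adj u v ∧ ∀ w, w ≠ u → w ≠ v → (G.Adj u w ↔ G.Adj v w)

/-- False twins: distinct, nonadjacent, with the same open neighborhoods. -/
def FalseTwins {V : Type*} (G : SimpleGraph V) (u v : V) : Prop :=
  u ≠ v ∧ ¬ G.Adj u v ∧ ∀ w, G.Adj u w ↔ G.Adj v w

/-- A twin pair: true twins or false twins. -/
def TwinPair {V : Type*} (G : SimpleGraph V) (u v : V) : Prop :=
  TrueTwins G u v ∨ FalseTwins G u v

/-- `G` is path-extremal: the path on the same number of vertices has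
coefficientwise at least as many zero forcing sets of every size. -/
noncomputable def PathExtremal {V : Type*} (G : SimpleGraph V) [Fintype V] : Prop :=
  ∀ k : ℕ, zfCount G k ≤ zfCount (SimpleGraph.pathGraph (Fintype.card V)) k


/-!
A twin pair `{u, v}` is a fort: a vertex outside the pair adjacent to one twin is adjacent to
both, so no vertex can ever force into the pair. Hence every set avoiding both twins is
non-forcing, and `z'(G;k) ≥ C(n-2,k)`.

On the path `P_n`, a set containing an end vertex or two consecutive vertices is forcing, so a
non-forcing `k`-set is a `k`-subset of the `n - 2` inner vertices with no two consecutive; there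
are at most `C(n-k-1,k)` of these. As `z(G;k) + z'(G;k) = C(n,k)` for every graph, the bound on
`z'` is the same as `z(G;k) ≤ z(P_n;k)`.
-/

open Finset

section Forts

variable {V : Type*} {G : SimpleGraph V}

theorem ZFClosure.notMem_of_isFort {S F : Set V} (hF : IsFort G F) (hSF : Disjoint S F)
    {w : V} (hw : ZFClosure G S w) : w ∉ F := by
  induction hw with
  | init hwS => exact hSF.notMem_of_mem_left hwS
  | @force x w _ hxw _ hx_notMem hothers =>
    intro hwF
    rcases hF x hx_notMem with hnone | ⟨w₁, hw₁, w₂, hw₂, hne, hxw₁, hxw₂⟩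
    · exact hnone w hwF hxw
    · obtain ⟨y, hyF, hxy, hyw⟩ : ∃ y ∈ F, G.Adj x y ∧ y ≠ w := by
        by_cases h : w₁ = w
        · exact ⟨w₂, hw₂, hxw₂, fun h₂ => hne (h.trans h₂.symm)⟩
        · exact ⟨w₁, hw₁, hxw₁, h⟩
      exact hothers y hxy hyw hyF

theorem IsFort.not_isZeroForcing {S F : Set V} (hF : IsFort G F) (hne : F.Nonempty)
    (hSF : Disjoint S F) : ¬ IsZeroForcing G S := fun hS =>
  let ⟨w, hw⟩ := hne
  (hS w).notMem_of_isFort hF hSF hw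

theorem TwinPair.ne {u v : V} (h : TwinPair G u v) : u ≠ v := by
  rcases h with ⟨hadj, _⟩ | ⟨hne, _, _⟩
  exacts [hadj.ne, hne]

theorem TwinPair.adj_iff {u v : V} (h : TwinPair G u v) {x : V} (hxu : x ≠ u) (hxv : x ≠ v) :
    G.Adj x u ↔ G.Adj x v := by
  rw [G.adj_comm x u, G.adj_comm x v]
  rcases h with ⟨_, h⟩ | ⟨_, _, h⟩
  exacts [h x hxu hxv, h x]

theorem TwinPair.isFort {u v : V} (h : TwinPair G u v) : IsFort G {u, v} := by
  intro x hx
  simp only [Set.mem_insert_iff, Set.mem_singleton_iff, not_or] at hx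
  by_cases hxu : G.Adj x u
  · exact .inr ⟨u, .inl rfl, v, .inr rfl, h.ne, hxu, (h.adj_iff hx.1 hx.2).1 hxu⟩
  · refine .inl ?_
    rintro w (rfl | rfl)
    exacts [hxu, fun hxv => hxu ((h.adj_iff hx.1 hx.2).2 hxv)]

end Forts

section Counting

variable {V : Type*} [Fintype V] (G : SimpleGraph V) (k : ℕ)

open Classical in
theorem nfCount_eq_card_filter :
    nfCount G k = #((univ.powersetCard k).filter fun S : Finset V => ¬ IsZeroForcing G ↑S) := by
  rw [nfCount, Nat.card_eq_fintype_card, Fintype.card_subtype]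
  congr 1
  ext S
  simp

open Classical in
theorem zfCount_eq_card_filter :
    zfCount G k = #((univ.powersetCard k).filter fun S : Finset V => IsZeroForcing G ↑S) := by
  rw [zfCount, Nat.card_eq_fintype_card, Fintype.card_subtype]
  congr 1
  ext S
  simp

theorem zfCount_add_nfCount : zfCount G k + nfCount G k = (Fintype.card V).choose k := by
  classical
  rw [zfCount_eq_card_filter, nfCount_eq_card_filter, card_filter_add_card_filter_not,
    card_powersetCard, card_univ]

theorem zfCount_le_zfCount_of_nfCount_le {W : Type*} [Fintype W] (H : SimpleGraph W)
    (hVW : Fintype.card V = Fintype.card W) (h : nfCount H k ≤ nfCount G k) :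
    zfCount G k ≤ zfCount H k := by
  have hG := zfCount_add_nfCount G k
  have hH := zfCount_add_nfCount H k
  rw [hVW] at hG
  omega

theorem IsFort.choose_card_sub_le_nfCount {G : SimpleGraph V} {F : Finset V}
    (hF : IsFort G (F : Set V)) (hne : F.Nonempty) :
    (Fintype.card V - #F).choose k ≤ nfCount G k := by
  classical
  rw [nfCount_eq_card_filter, ← card_compl, ← card_powersetCard]
  refine card_le_card fun S hS => mem_filter.2 ⟨powersetCard_mono (subset_univ _) hS, ?_⟩
  have hSF : Disjoint S F := subset_compl_iff_disjoint_right.1 (mem_powersetCard.1 hS).1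
  exact hF.not_isZeroForcing (by exact_mod_cast hne) (by exact_mod_cast hSF)

theorem TwinPair.choose_card_sub_two_le_nfCount {G : SimpleGraph V} {u v : V}
    (h : TwinPair G u v) : (Fintype.card V - 2).choose k ≤ nfCount G k := by
  classical
  have hF : IsFort G (({u, v} : Finset V) : Set V) := by
    rw [coe_pair]; exact h.isFort
  simpa [card_pair h.ne] using hF.choose_card_sub_le_nfCount k (insert_nonempty u {v})

end Counting

section NoConsecutive

def NoTwoConsecutive (S : Finset ℕ) : Prop := ∀ a ∈ S, a + 1 ∉ S

instance : DecidablePred NoTwoConsecutive := fun S => by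
  unfold NoTwoConsecutive; infer_instance

theorem card_filter_noTwoConsecutive_le (a b k : ℕ) :
    #((Ico a b).powersetCard k |>.filter NoTwoConsecutive) ≤ (b + 1 - a - k).choose k := by
  induction b using Nat.strong_induction_on generalizing k with
  | _ b ih =>
  rcases k with _ | k
  · exact (card_filter_le _ _).trans (by simp)
  rcases Nat.lt_or_ge b (a + k + 1) with hb | hb
  · rw [powersetCard_eq_empty.2 (by simp; omega)]
    simp
  obtain ⟨c, rfl⟩ : ∃ c, b = c + 1 := ⟨b - 1, by omega⟩
  set A := (Ico a (c + 1)).powersetCard (k + 1) |>.filter NoTwoConsecutive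
  have hwithout : #(A.filter (c ∉ ·)) ≤ (c - a - k).choose (k + 1) := by
    refine (card_le_card fun S hS => ?_).trans
      ((ih c (by omega) (k + 1)).trans_eq (by congr 1; omega))
    simp only [A, mem_filter, mem_powersetCard] at hS ⊢
    refine ⟨⟨fun x hx => ?_, hS.1.1.2⟩, hS.1.2⟩
    have := mem_Ico.1 (hS.1.1.1 hx)
    have : x ≠ c := fun h => hS.2 (h ▸ hx)
    exact mem_Ico.2 (by omega)
  have hwith : #(A.filter (c ∈ ·)) ≤ (c - a - k).choose k := by
    have hchoose : (c - 1 + 1 - a - k).choose k = (c - a - k).choose k := by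
      rcases Nat.eq_zero_or_pos c with rfl | hc
      · obtain ⟨rfl, rfl⟩ : a = 0 ∧ k = 0 := by omega
        rfl
      · congr 1; omega
    refine (card_le_card_of_injOn (·.erase c) (fun S hS => ?_) fun S₁ h₁ S₂ h₂ h => ?_).trans
      ((ih (c - 1) (by omega) k).trans_eq hchoose)
    · simp only [A, coe_filter, mem_filter, mem_powersetCard, Set.mem_ofPred_eq] at hS ⊢
      obtain ⟨⟨⟨hsub, hcard⟩, hS⟩, hc⟩ := hS
      refine ⟨⟨fun x hx => ?_, by rw [card_erase_of_mem hc, hcard]; rfl⟩,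
        fun x hx hx₁ => hS x (mem_of_mem_erase hx) (mem_of_mem_erase hx₁)⟩
      have := mem_Ico.1 (hsub (mem_of_mem_erase hx))
      have : x ≠ c := ne_of_mem_erase hx
      have : x + 1 ≠ c := fun h => hS x (mem_of_mem_erase hx) (h ▸ hc)
      exact mem_Ico.2 (by omega)
    · simp only [A, coe_filter, Set.mem_ofPred_eq] at h₁ h₂
      rw [← insert_erase h₁.2, ← insert_erase h₂.2]
      exact congrArg (insert c) h
  calc #A = #(A.filter (c ∉ ·)) + #(A.filter (c ∈ ·)) := by
        rw [← card_filter_add_card_filter_not (p := (c ∉ ·))]; simp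
    _ ≤ (c - a - k).choose (k + 1) + (c - a - k).choose k := add_le_add hwithout hwith
    _ = (c + 1 + 1 - a - (k + 1)).choose (k + 1) := by
        rw [show c + 1 + 1 - a - (k + 1) = c - a - k + 1 by omega, Nat.choose_succ_succ', add_comm]

end NoConsecutive

section PathGraph

variable {n : ℕ} {S : Set (Fin n)}

theorem zfClosure_pathGraph_succ_succ {i : ℕ} (hi : i + 2 < n)
    (h₀ : ZFClosure (pathGraph n) S ⟨i, by omega⟩)
    (h₁ : ZFClosure (pathGraph n) S ⟨i + 1, by omega⟩) :
    ZFClosure (pathGraph n) S ⟨i + 2, hi⟩ := by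
  refine .force h₁ (pathGraph_adj.2 (.inl rfl)) fun x hx hne => ?_
  obtain rfl : x = ⟨i, by omega⟩ := by
    rw [pathGraph_adj] at hx
    exact Fin.ext (by have := Fin.val_ne_of_ne hne; simp only at hx this ⊢; omega)
  exact h₀

theorem zfClosure_pathGraph_of_succ_succ {i : ℕ} (hi : i + 2 < n)
    (h₁ : ZFClosure (pathGraph n) S ⟨i + 1, by omega⟩)
    (h₂ : ZFClosure (pathGraph n) S ⟨i + 2, hi⟩) :
    ZFClosure (pathGraph n) S ⟨i, by omega⟩ := by
  refine .force h₁ (pathGraph_adj.2 (.inr rfl)) fun x hx hne => ?_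
  obtain rfl : x = ⟨i + 2, hi⟩ := by
    rw [pathGraph_adj] at hx
    exact Fin.ext (by have := Fin.val_ne_of_ne hne; simp only at hx this ⊢; omega)
  exact h₂

theorem isZeroForcing_pathGraph_of_succ {i : ℕ} (hi : i + 1 < n)
    (h₀ : ZFClosure (pathGraph n) S ⟨i, by omega⟩)
    (h₁ : ZFClosure (pathGraph n) S ⟨i + 1, hi⟩) :
    IsZeroForcing (pathGraph n) S := by
  let Blue (j : ℕ) : Prop := ∀ h : j < n, ZFClosure (pathGraph n) S ⟨j, h⟩
  have up : ∀ j, i ≤ j → Blue j ∧ Blue (j + 1) := by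
    refine Nat.le_induction ⟨fun _ => h₀, fun _ => h₁⟩ fun j _ ⟨hj, hj₁⟩ => ⟨hj₁, fun h => ?_⟩
    exact zfClosure_pathGraph_succ_succ h (hj (by omega)) (hj₁ (by omega))
  have down : ∀ j, j ≤ i → Blue j ∧ Blue (j + 1) := by
    refine fun j => Nat.decreasingInduction (fun j _ ⟨hj₁, hj₂⟩ => ⟨fun h => ?_, hj₁⟩)
      ⟨fun _ => h₀, fun _ => h₁⟩
    exact zfClosure_pathGraph_of_succ_succ (by omega) (hj₁ (by omega)) (hj₂ (by omega))
  intro w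
  rcases le_total i w with h | h
  exacts [(up w h).1 w.isLt, (down w h).1 w.isLt]

theorem isZeroForcing_pathGraph_of_mem_of_succ_mem {s t : Fin n} (hs : s ∈ S) (ht : t ∈ S)
    (hst : s.val + 1 = t.val) : IsZeroForcing (pathGraph n) S := by
  obtain ⟨s, _⟩ := s
  obtain ⟨t, _⟩ := t
  simp only at hst
  subst hst
  exact isZeroForcing_pathGraph_of_succ _ (.init hs) (.init ht)

theorem isZeroForcing_pathGraph_of_zero_mem (hn : 0 < n) (h : ⟨0, hn⟩ ∈ S) :
    IsZeroForcing (pathGraph n) S := by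
  rcases Nat.lt_or_ge n 2 with hn₂ | hn₂
  · intro w
    obtain rfl : w = ⟨0, hn⟩ := Fin.ext (by omega)
    exact .init h
  · refine isZeroForcing_pathGraph_of_succ (i := 0) hn₂ (.init h) ?_
    refine .force (.init h) (pathGraph_adj.2 (.inl rfl)) fun x hx hne => absurd hx ?_
    rw [pathGraph_adj]
    have := Fin.val_ne_of_ne hne
    simp only at this ⊢
    omega

theorem isZeroForcing_pathGraph_of_last_mem (hn : 0 < n) (h : ⟨n - 1, by omega⟩ ∈ S) :
    IsZeroForcing (pathGraph n) S := by
  rcases Nat.lt_or_ge n 2 with hn₂ | hn₂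
  · intro w
    obtain rfl : w = ⟨n - 1, by omega⟩ := Fin.ext (by omega)
    exact .init h
  · have hlast : (⟨n - 2 + 1, by omega⟩ : Fin n) ∈ S := by
      convert h using 2; omega
    refine isZeroForcing_pathGraph_of_succ (i := n - 2) (by omega) ?_ (.init hlast)
    refine .force (.init hlast) (pathGraph_adj.2 (.inr rfl)) fun x hx hne => absurd hx ?_
    rw [pathGraph_adj]
    have := Fin.val_ne_of_ne hne
    simp only at this ⊢
    omega

end PathGraph

section PathGraphNonforcing

variable {n : ℕ}

theorem map_val_subset_Ico_of_not_isZeroForcing {S : Finset (Fin n)}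
    (hS : ¬ IsZeroForcing (pathGraph n) ↑S) : S.map Fin.valEmbedding ⊆ Ico 1 (n - 1) := by
  intro x hx
  obtain ⟨⟨s, hsn⟩, hs, rfl⟩ := mem_map.1 hx
  have h₀ : s ≠ 0 := by
    rintro rfl; exact hS (isZeroForcing_pathGraph_of_zero_mem hsn hs)
  have h₁ : s ≠ n - 1 := by
    rintro rfl; exact hS (isZeroForcing_pathGraph_of_last_mem (by omega) hs)
  simp only [Fin.valEmbedding_apply, mem_Ico]
  omega

theorem noTwoConsecutive_map_val_of_not_isZeroForcing {S : Finset (Fin n)}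
    (hS : ¬ IsZeroForcing (pathGraph n) ↑S) : NoTwoConsecutive (S.map Fin.valEmbedding) := by
  intro x hx hx₁
  obtain ⟨s, hs, rfl⟩ := mem_map.1 hx
  obtain ⟨t, ht, hst⟩ := mem_map.1 hx₁
  exact hS (isZeroForcing_pathGraph_of_mem_of_succ_mem hs ht hst.symm)

theorem nfCount_pathGraph_le (k : ℕ) : nfCount (pathGraph n) k ≤ (n - k - 1).choose k := by
  classical
  rw [nfCount_eq_card_filter]
  calc _ ≤ #((Ico 1 (n - 1)).powersetCard k |>.filter NoTwoConsecutive) := by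
        refine card_le_card_of_injOn (·.map Fin.valEmbedding) (fun S hS => ?_)
          (Finset.map_injective _).injOn
        simp only [coe_filter, mem_powersetCard, subset_univ, true_and, Set.mem_ofPred_eq,
          card_map] at hS ⊢
        exact ⟨⟨map_val_subset_Ico_of_not_isZeroForcing hS.2, hS.1⟩,
          noTwoConsecutive_map_val_of_not_isZeroForcing hS.2⟩
    _ ≤ (n - 1 + 1 - 1 - k).choose k := card_filter_noTwoConsecutive_le _ _ _
    _ = (n - k - 1).choose k := by congr 1; omega

end PathGraphNonforcing

theorem pathExtremal_of_forall_choose_le {V : Type*} [Fintype V] {G : SimpleGraph V}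
    (h : ∀ k, (Fintype.card V - k - 1).choose k ≤ nfCount G k) : PathExtremal G := fun k =>
  zfCount_le_zfCount_of_nfCount_le G k _ (Fintype.card_fin _).symm
    ((nfCount_pathGraph_le k).trans (h k))

/-- If `G` contains a twin pair, then `z'(G;k) ≥ C(n-2,k) ≥ C(n-k-1,k)` for all
`0 ≤ k ≤ n`, and hence `G` is path-extremal. -/
theorem stmt_4 {V : Type*} [Fintype V] (G : SimpleGraph V) (u v : V)
    (h : TwinPair G u v) :
    (∀ k ≤ Fintype.card V,
      Nat.choose (Fintype.card V - 2) k ≤ nfCount G k ∧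
      Nat.choose (Fintype.card V - k - 1) k ≤ nfCount G k) ∧
    PathExtremal G := by
  have hfort := h.choose_card_sub_two_le_nfCount
  have hchoose (k : ℕ) : (Fintype.card V - k - 1).choose k ≤ (Fintype.card V - 2).choose k := by
    rcases k with _ | k
    · simp
    · exact Nat.choose_le_choose _ (by omega)
  have hpath (k : ℕ) := (hchoose k).trans (hfort k)
  exact ⟨fun k _ => ⟨hfort k, hpath k⟩, pathExtremal_of_forall_choose_le hpath⟩
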